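/- Transport equation for the relativistic vorticity: Let O ⊂ ℝ^{1+d} be open and let (ϱ,u) be a C² solution of the relativistic Euler equations on O with ϱ > 0, p(ϱ)+ϱ > 0, u⁰ > 0 and u^α u_α = −1, with p of class C². Let f : (0,∞) → (0,∞) be C² with f'(y)/f(y) = p'(y)/(p(y)+y), set v_α = f(ϱ) u_α, and define ω_{αβ} = ∂_α v_β − ∂_β v_α. Then for all α, β, on O: v^μ ∂_μ ω_{αβ} + ∂_α v^μ ω_{μβ} + ∂_β v^μ ω_{αμ} = 0. In particular, if ω vanishes at some time slice then it vanishes along the flow. -/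

import Mathlib

open Set

noncomputable section

/-- The diagonal entries of the Minkowski metric `m = diag(−1,1,…,1)` on `ℝ^{1+d}`. -/
def mlt (d : ℕ) (α : Fin (d + 1)) : ℝ := if α = 0 then -1 else 1

/-- Partial derivative `∂_μ` of a function on `ℝ^{1+d}`. -/
def pder (d : ℕ) (μ : Fin (d + 1)) (F : (Fin (d + 1) → ℝ) → ℝ) (q : Fin (d + 1) → ℝ) : ℝ :=
  fderiv ℝ F q (Pi.single μ 1)

/-- The relativistic Euler equations with equation of state `peos` on the set `O`:
`u^μ ∂_μ ϱ + (p+ϱ) ∂_μ u^μ = 0` and `(p+ϱ) u^μ ∂_μ u_α + Π^μ_α ∂_μ p = 0`, where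
`Π^μ_α = δ^μ_α + u^μ u_α` and indices are lowered with `m = diag(−1,1,…,1)`. -/
def RelEuler (d : ℕ) (peos : ℝ → ℝ) (O : Set (Fin (d + 1) → ℝ))
    (ϱ : (Fin (d + 1) → ℝ) → ℝ) (u : (Fin (d + 1) → ℝ) → Fin (d + 1) → ℝ) : Prop :=
  ∀ q ∈ O,
    ((∑ μ, u q μ * pder d μ ϱ q)
      + (peos (ϱ q) + ϱ q) * ∑ μ, pder d μ (fun z => u z μ) q = 0) ∧
    ∀ α, (peos (ϱ q) + ϱ q) * (∑ μ, u q μ * pder d μ (fun z => mlt d α * u z α) q)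
        + pder d α (fun z => peos (ϱ z)) q
        + mlt d α * u q α * ∑ μ, u q μ * pder d μ (fun z => peos (ϱ z)) q = 0

/-- The lowered good velocity `v_α = f(ϱ) m_{αα} u^α` (no summation; `m` diagonal). -/
def vLow (d : ℕ) (f : ℝ → ℝ) (ϱ : (Fin (d + 1) → ℝ) → ℝ)
    (u : (Fin (d + 1) → ℝ) → Fin (d + 1) → ℝ) (α : Fin (d + 1))
    (z : Fin (d + 1) → ℝ) : ℝ :=
  f (ϱ z) * mlt d α * u z α

/-- The relativistic vorticity two-form `ω_{αβ} = ∂_α v_β − ∂_β v_α`. -/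
def vort (d : ℕ) (f : ℝ → ℝ) (ϱ : (Fin (d + 1) → ℝ) → ℝ)
    (u : (Fin (d + 1) → ℝ) → Fin (d + 1) → ℝ) (α β : Fin (d + 1))
    (q : Fin (d + 1) → ℝ) : ℝ :=
  pder d α (vLow d f ϱ u β) q - pder d β (vLow d f ϱ u α) q

/-!
Write `v^μ = f(ϱ) u^μ` and `ω = dv`. The claimed identity says that the Lie derivative `ℒ_v ω`
vanishes. Since `dω = 0`, Cartan's formula gives `ℒ_v ω = d(ι_v ω)`, so it suffices that the
contraction `v^μ ω_{μα}` vanishes on `O`. Using `∂_α (u^μ u_μ) = 0` and `f'(p+ϱ) = p' f`, that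
contraction equals `f(ϱ)² / (p+ϱ)` times the momentum equation.
-/

open Finset

section PartialDerivative

variable {d : ℕ} {F G : (Fin (d + 1) → ℝ) → ℝ} {q : Fin (d + 1) → ℝ}

lemma pder_congr (h : F =ᶠ[nhds q] G) (μ : Fin (d + 1)) : pder d μ F q = pder d μ G q := by
  rw [pder, pder, h.fderiv_eq]

lemma pder_eq_zero_of_eqOn_const {O : Set (Fin (d + 1) → ℝ)} (hO : IsOpen O) (hq : q ∈ O)
    {c : ℝ} (h : ∀ z ∈ O, F z = c) (μ : Fin (d + 1)) : pder d μ F q = 0 := by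
  rw [pder_congr (Filter.eventuallyEq_of_mem (hO.mem_nhds hq) h) μ]
  simp [pder]

lemma pder_mul (hF : DifferentiableAt ℝ F q) (hG : DifferentiableAt ℝ G q) (μ : Fin (d + 1)) :
    pder d μ (fun z => F z * G z) q = pder d μ F q * G q + F q * pder d μ G q := by
  simp [pder, fderiv_fun_mul hF hG, add_comm, mul_comm]

lemma pder_const_mul (hF : DifferentiableAt ℝ F q) (c : ℝ) (μ : Fin (d + 1)) :
    pder d μ (fun z => c * F z) q = c * pder d μ F q := by
  simp [pder, fderiv_const_mul hF]

lemma pder_sub (hF : DifferentiableAt ℝ F q) (hG : DifferentiableAt ℝ G q) (μ : Fin (d + 1)) :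
    pder d μ (fun z => F z - G z) q = pder d μ F q - pder d μ G q := by
  simp [pder, fderiv_fun_sub hF hG]

lemma pder_sum {ι : Type*} (s : Finset ι) {F : ι → (Fin (d + 1) → ℝ) → ℝ}
    (h : ∀ i ∈ s, DifferentiableAt ℝ (F i) q) (μ : Fin (d + 1)) :
    pder d μ (fun z => ∑ i ∈ s, F i z) q = ∑ i ∈ s, pder d μ (F i) q := by
  simp [pder, fderiv_fun_sum h]

lemma pder_comp {g : ℝ → ℝ} (hg : DifferentiableAt ℝ g (F q)) (hF : DifferentiableAt ℝ F q)
    (μ : Fin (d + 1)) : pder d μ (fun z => g (F z)) q = deriv g (F q) * pder d μ F q := by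
  have h : HasFDerivAt (fun z => g (F z)) (deriv g (F q) • fderiv ℝ F q) q :=
    hg.hasDerivAt.comp_hasFDerivAt q hF.hasFDerivAt
  simp [pder, h.fderiv]

lemma contDiffAt_pder (hF : ContDiffAt ℝ 2 F q) (μ : Fin (d + 1)) :
    ContDiffAt ℝ 1 (pder d μ F) q :=
  (hF.fderiv_right (m := 1) (by norm_num)).clm_apply contDiffAt_const

lemma pder_pder_eq_fderiv_fderiv (hF : ContDiffAt ℝ 2 F q) (α β : Fin (d + 1)) :
    pder d α (pder d β F) q = fderiv ℝ (fderiv ℝ F) q (Pi.single α 1) (Pi.single β 1) := by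
  have hF' : DifferentiableAt ℝ (fderiv ℝ F) q :=
    (hF.fderiv_right (m := 1) (by norm_num)).differentiableAt one_ne_zero
  change fderiv ℝ (fun z => fderiv ℝ F z (Pi.single β 1)) q (Pi.single α 1) = _
  simp [fderiv_clm_apply hF' (differentiableAt_const _)]

lemma pder_pder_comm (hF : ContDiffAt ℝ 2 F q) (α β : Fin (d + 1)) :
    pder d α (pder d β F) q = pder d β (pder d α F) q := by
  rw [pder_pder_eq_fderiv_fderiv hF, pder_pder_eq_fderiv_fderiv hF]
  exact (hF.isSymmSndFDerivAt (by simp [minSmoothness_of_isRCLikeNormedField])).eq _ _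

end PartialDerivative

section Curl

variable {d : ℕ} {w V : Fin (d + 1) → (Fin (d + 1) → ℝ) → ℝ} {q : Fin (d + 1) → ℝ}

def curl (w : Fin (d + 1) → (Fin (d + 1) → ℝ) → ℝ) (α β : Fin (d + 1))
    (q : Fin (d + 1) → ℝ) : ℝ :=
  pder d α (w β) q - pder d β (w α) q

lemma curl_antisymm (α β : Fin (d + 1)) : curl w α β q = -curl w β α q := by
  rw [curl, curl]
  ring

lemma differentiableAt_curl (hw : ∀ β, ContDiffAt ℝ 2 (w β) q) (α β : Fin (d + 1)) :
    DifferentiableAt ℝ (curl w α β) q :=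
  ((contDiffAt_pder (hw β) α).sub (contDiffAt_pder (hw α) β)).differentiableAt one_ne_zero

lemma pder_curl_cyclic (hw : ∀ β, ContDiffAt ℝ 2 (w β) q) (μ α β : Fin (d + 1)) :
    pder d μ (curl w α β) q = pder d α (curl w μ β) q - pder d β (curl w μ α) q := by
  have hpder : ∀ γ δ, DifferentiableAt ℝ (pder d γ (w δ)) q := fun γ δ =>
    (contDiffAt_pder (hw δ) γ).differentiableAt one_ne_zero
  have hsplit : ∀ γ δ ε, pder d ε (curl w γ δ) q
      = pder d ε (pder d γ (w δ)) q - pder d ε (pder d δ (w γ)) q := fun γ δ ε =>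
    pder_sub (hpder γ δ) (hpder δ γ) ε
  rw [hsplit, hsplit, hsplit, pder_pder_comm (hw β) μ α, pder_pder_comm (hw α) μ β,
    pder_pder_comm (hw μ) α β]
  ring

lemma pder_sum_mul_curl (hw : ∀ β, ContDiffAt ℝ 2 (w β) q)
    (hV : ∀ μ, DifferentiableAt ℝ (V μ) q) (γ δ : Fin (d + 1)) :
    pder d γ (fun z => ∑ μ, V μ z * curl w μ δ z) q
      = ∑ μ, (pder d γ (V μ) q * curl w μ δ q + V μ q * pder d γ (curl w μ δ) q) := by
  rw [pder_sum (F := fun μ z => V μ z * curl w μ δ z) _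
    (fun μ _ => (hV μ).fun_mul (differentiableAt_curl hw μ δ))]
  exact sum_congr rfl fun μ _ => pder_mul (hV μ) (differentiableAt_curl hw μ δ) γ

lemma lieDeriv_curl_eq (hw : ∀ β, ContDiffAt ℝ 2 (w β) q)
    (hV : ∀ μ, DifferentiableAt ℝ (V μ) q) (α β : Fin (d + 1)) :
    (∑ μ, V μ q * pder d μ (curl w α β) q)
        + (∑ μ, pder d α (V μ) q * curl w μ β q)
        + (∑ μ, pder d β (V μ) q * curl w α μ q)
      = pder d α (fun z => ∑ μ, V μ z * curl w μ β z) q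
        - pder d β (fun z => ∑ μ, V μ z * curl w μ α z) q := by
  simp only [pder_sum_mul_curl hw hV, pder_curl_cyclic hw _ α β, curl_antisymm α,
    sum_add_distrib, mul_sub, mul_neg, sum_sub_distrib, sum_neg_distrib]
  ring

end Curl

section Euler

variable {d : ℕ} {peos f : ℝ → ℝ} {O : Set (Fin (d + 1) → ℝ)}
  {ϱ : (Fin (d + 1) → ℝ) → ℝ} {u : (Fin (d + 1) → ℝ) → Fin (d + 1) → ℝ} {z : Fin (d + 1) → ℝ}

lemma vort_eq_curl : vort d f ϱ u = curl (vLow d f ϱ u) := rfl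

lemma pder_vLow (hϱ : DifferentiableAt ℝ ϱ z) (hf : DifferentiableAt ℝ f (ϱ z)) {ν : Fin (d + 1)}
    (hu : DifferentiableAt ℝ (fun w => u w ν) z) (μ : Fin (d + 1)) :
    pder d μ (vLow d f ϱ u ν) z = mlt d ν * (deriv f (ϱ z) * pder d μ ϱ z * u z ν
      + f (ϱ z) * pder d μ (fun w => u w ν) z) := by
  have hfϱ : DifferentiableAt ℝ (fun w => f (ϱ w)) z := hf.comp z hϱ
  have hv : vLow d f ϱ u ν = fun w => mlt d ν * (f (ϱ w) * u w ν) := by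
    ext w
    simp only [vLow]
    ring
  rw [hv, pder_const_mul (hfϱ.fun_mul hu), pder_mul hfϱ hu, pder_comp hf hϱ]

lemma sum_mlt_mul_pder_eq_zero (hO : IsOpen O) (hz : z ∈ O)
    (hnorm : ∀ q ∈ O, ∑ α, mlt d α * u q α * u q α = -1)
    (hu : ∀ μ, DifferentiableAt ℝ (fun w => u w μ) z) (γ : Fin (d + 1)) :
    ∑ μ, mlt d μ * u z μ * pder d γ (fun w => u w μ) z = 0 := by
  have hdiff : ∀ μ, DifferentiableAt ℝ (fun w => mlt d μ * u w μ * u w μ) z := fun μ =>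
    ((hu μ).const_mul _).fun_mul (hu μ)
  have h := pder_eq_zero_of_eqOn_const hO hz hnorm γ
  rw [pder_sum _ (fun μ _ => hdiff μ)] at h
  simp only [pder_mul ((hu _).const_mul _) (hu _), pder_const_mul (hu _)] at h
  calc ∑ μ, mlt d μ * u z μ * pder d γ (fun w => u w μ) z
      = (∑ μ, (mlt d μ * pder d γ (fun w => u w μ) z * u z μ
          + mlt d μ * u z μ * pder d γ (fun w => u w μ) z)) / 2 := by
        rw [sum_div]
        exact sum_congr rfl fun μ _ => by ring
    _ = 0 := by rw [h, zero_div]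

lemma RelEuler.momentum (heuler : RelEuler d peos O ϱ u) (hz : z ∈ O)
    (hϱ : DifferentiableAt ℝ ϱ z) (hp : DifferentiableAt ℝ peos (ϱ z)) {α : Fin (d + 1)}
    (hu : DifferentiableAt ℝ (fun w => u w α) z) :
    (peos (ϱ z) + ϱ z) * mlt d α * ∑ μ, u z μ * pder d μ (fun w => u w α) z
      + deriv peos (ϱ z) * (pder d α ϱ z + mlt d α * u z α * ∑ μ, u z μ * pder d μ ϱ z)
      = 0 := by
  have h := (heuler z hz).2 α
  simp only [pder_const_mul hu, pder_comp hp hϱ, mul_left_comm _ (mlt d α), ← mul_sum,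
    mul_left_comm _ (deriv peos (ϱ z))] at h
  linear_combination h

lemma sum_mul_vort_eq_zero (hO : IsOpen O) (hz : z ∈ O)
    (hϱ : DifferentiableAt ℝ ϱ z) (hu : ∀ μ, DifferentiableAt ℝ (fun w => u w μ) z)
    (hf : DifferentiableAt ℝ f (ϱ z)) (hp : DifferentiableAt ℝ peos (ϱ z))
    (hpϱ : peos (ϱ z) + ϱ z ≠ 0)
    (hfode : deriv f (ϱ z) * (peos (ϱ z) + ϱ z) = deriv peos (ϱ z) * f (ϱ z))
    (hnorm : ∀ q ∈ O, ∑ α, mlt d α * u q α * u q α = -1)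
    (heuler : RelEuler d peos O ϱ u) (α : Fin (d + 1)) :
    ∑ μ, f (ϱ z) * u z μ * vort d f ϱ u μ α z = 0 := by
  have hexpand : ∑ μ, f (ϱ z) * u z μ * vort d f ϱ u μ α z
      = f (ϱ z) * deriv f (ϱ z) * mlt d α * u z α * (∑ μ, u z μ * pder d μ ϱ z)
        + f (ϱ z) ^ 2 * mlt d α * (∑ μ, u z μ * pder d μ (fun w => u w α) z)
        - f (ϱ z) * deriv f (ϱ z) * pder d α ϱ z * (∑ μ, mlt d μ * u z μ * u z μ)
        - f (ϱ z) ^ 2 * (∑ μ, mlt d μ * u z μ * pder d α (fun w => u w μ) z) := by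
    simp only [mul_sum, ← sum_add_distrib, ← sum_sub_distrib]
    refine sum_congr rfl fun μ _ => ?_
    rw [vort, pder_vLow hϱ hf (hu α), pder_vLow hϱ hf (hu μ)]
    ring
  rw [hexpand, hnorm z hz, sum_mlt_mul_pder_eq_zero hO hz hnorm hu]
  refine mul_left_cancel₀ hpϱ ?_
  linear_combination f (ϱ z) ^ 2 * heuler.momentum hz hϱ hp (hu α)
    + f (ϱ z) * (pder d α ϱ z + mlt d α * u z α * ∑ μ, u z μ * pder d μ ϱ z) * hfode

end Euler

theorem relativistic_vorticity_transport_general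
    (d : ℕ) (peos f : ℝ → ℝ)
    (O : Set (Fin (d + 1) → ℝ)) (hO : IsOpen O)
    (ϱ : (Fin (d + 1) → ℝ) → ℝ) (u : (Fin (d + 1) → ℝ) → Fin (d + 1) → ℝ)
    (hp : ContDiffOn ℝ 2 peos (Ioi 0))
    (hϱ : ContDiffOn ℝ 2 ϱ O) (hu : ContDiffOn ℝ 2 u O)
    (hϱpos : ∀ q ∈ O, 0 < ϱ q)
    (hpϱ : ∀ q ∈ O, 0 < peos (ϱ q) + ϱ q)
    (hnorm : ∀ q ∈ O, ∑ α, mlt d α * u q α * u q α = -1)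
    (hf : ContDiffOn ℝ 2 f (Ioi 0))
    (hfode : ∀ y > (0 : ℝ), deriv f y * (peos y + y) = deriv peos y * f y)
    (heuler : RelEuler d peos O ϱ u) :
    ∀ q ∈ O, ∀ α β : Fin (d + 1),
      (∑ μ, f (ϱ q) * u q μ * pder d μ (vort d f ϱ u α β) q)
        + (∑ μ, pder d α (fun z => f (ϱ z) * u z μ) q * vort d f ϱ u μ β q)
        + (∑ μ, pder d β (fun z => f (ϱ z) * u z μ) q * vort d f ϱ u α μ q) = 0 := by
  intro q hq α β
  have hϱ2 : ∀ z ∈ O, ContDiffAt ℝ 2 ϱ z := fun z hz => hϱ.contDiffAt (hO.mem_nhds hz)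
  have hu2 : ∀ z ∈ O, ∀ μ, ContDiffAt ℝ 2 (fun w => u w μ) z := fun z hz =>
    contDiffAt_pi.mp (hu.contDiffAt (hO.mem_nhds hz))
  have hf2 : ∀ z ∈ O, ContDiffAt ℝ 2 f (ϱ z) := fun z hz =>
    hf.contDiffAt (Ioi_mem_nhds (hϱpos z hz))
  have hp2 : ∀ z ∈ O, ContDiffAt ℝ 2 peos (ϱ z) := fun z hz =>
    hp.contDiffAt (Ioi_mem_nhds (hϱpos z hz))
  have hcontraction : ∀ z ∈ O, ∀ δ, ∑ μ, f (ϱ z) * u z μ * vort d f ϱ u μ δ z = 0 :=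
    fun z hz => sum_mul_vort_eq_zero hO hz ((hϱ2 z hz).differentiableAt two_ne_zero)
      (fun μ => (hu2 z hz μ).differentiableAt two_ne_zero)
      ((hf2 z hz).differentiableAt two_ne_zero) ((hp2 z hz).differentiableAt two_ne_zero)
      (hpϱ z hz).ne' (hfode _ (hϱpos z hz)) hnorm heuler
  have hv : ∀ ν, ContDiffAt ℝ 2 (vLow d f ϱ u ν) q := fun ν =>
    (((hf2 q hq).comp q (hϱ2 q hq)).mul contDiffAt_const).mul (hu2 q hq ν)
  have hV : ∀ μ, DifferentiableAt ℝ (fun z => f (ϱ z) * u z μ) q := fun μ =>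
    (((hf2 q hq).comp q (hϱ2 q hq)).mul (hu2 q hq μ)).differentiableAt two_ne_zero
  rw [vort_eq_curl] at hcontraction ⊢
  rw [lieDeriv_curl_eq (V := fun μ z => f (ϱ z) * u z μ) hv hV,
    pder_eq_zero_of_eqOn_const hO hq (hcontraction · · β),
    pder_eq_zero_of_eqOn_const hO hq (hcontraction · · α), sub_zero]

/-- **Transport equation for the relativistic vorticity** (equation (1.22)): for a `C²`
solution of the relativistic Euler equations,
`v^μ ∂_μ ω_{αβ} + ∂_α v^μ ω_{μβ} + ∂_β v^μ ω_{αμ} = 0`. -/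
theorem relativistic_vorticity_transport
    (d : ℕ) (hd : 1 ≤ d) (peos f : ℝ → ℝ)
    (O : Set (Fin (d + 1) → ℝ)) (hO : IsOpen O)
    (ϱ : (Fin (d + 1) → ℝ) → ℝ) (u : (Fin (d + 1) → ℝ) → Fin (d + 1) → ℝ)
    (hp : ContDiffOn ℝ 2 peos (Ioi 0))
    (hϱ : ContDiffOn ℝ 2 ϱ O) (hu : ContDiffOn ℝ 2 u O)
    (hϱpos : ∀ q ∈ O, 0 < ϱ q)
    (hpϱ : ∀ q ∈ O, 0 < peos (ϱ q) + ϱ q)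
    (hu0 : ∀ q ∈ O, 0 < u q 0)
    (hnorm : ∀ q ∈ O, ∑ α, mlt d α * u q α * u q α = -1)
    (hf : ContDiffOn ℝ 2 f (Ioi 0)) (hfpos : ∀ y > (0 : ℝ), 0 < f y)
    (hfode : ∀ y > (0 : ℝ), deriv f y * (peos y + y) = deriv peos y * f y)
    (heuler : RelEuler d peos O ϱ u) :
    ∀ q ∈ O, ∀ α β : Fin (d + 1),
      (∑ μ, f (ϱ q) * u q μ * pder d μ (vort d f ϱ u α β) q)
        + (∑ μ, pder d α (fun z => f (ϱ z) * u z μ) q * vort d f ϱ u μ β q)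
        + (∑ μ, pder d β (fun z => f (ϱ z) * u z μ) q * vort d f ϱ u α μ q) = 0 :=
  relativistic_vorticity_transport_general d peos f O hO ϱ u hp hϱ hu hϱpos hpϱ hnorm hf hfode
    heuler
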